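/- arXiv:2312.01094 — 2 statements merged into one kernel-verified Lean document; each statement's English description precedes it below -/
import Mathlib

section
/- For f, g ∈ L²(ℝ₊, ℂ), the function φ(t) = ⟨L_t f, L_t g⟩ = ∫_0^∞ conj(f(x+t)) g(x+t) dx is absolutely continuous in t with derivative φ'(t) = −conj(f(t)) g(t) for a.e. t, and hence ∫_0^∞ e^{φ(t)} conj(f(t)) g(t) dt = e^{⟨f,g⟩} − 1 whenever f, g ∈ L²(ℝ₊). -/
open MeasureTheory

open Set Filter Metric Topology

open scoped Interval



theorem aux_ae_hasDerivAt (H : ℝ → ℂ) (hH : Integrable H) :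
    ∀ᵐ t : ℝ, HasDerivAt (fun τ => ∫ s in (0:ℝ)..τ, H s) (H t) t := by
  filter_upwards [IsUnifLocDoublingMeasure.ae_tendsto_average_norm_sub
    (μ := volume) hH.locallyIntegrable 1] with t ht
  rw [hasDerivAt_iff_tendsto_slope]
  have hδ : Tendsto (fun τ : ℝ => |τ - t| / 2) (𝓝[≠] t) (𝓝[>] 0) := by
    rw [tendsto_nhdsWithin_iff]
    constructor
    · have : Tendsto (fun τ : ℝ => |τ - t| / 2) (𝓝 t) (𝓝 (|t - t| / 2)) :=
        (((continuous_id.sub continuous_const).abs.div_const 2).tendsto t)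
      simpa using this.mono_left nhdsWithin_le_nhds
    · filter_upwards [self_mem_nhdsWithin] with τ (hτ : τ ≠ t)
      have : τ - t ≠ 0 := sub_ne_zero.2 hτ
      simp only [Set.mem_Ioi]
      positivity
  have hmem : ∀ᶠ τ in 𝓝[≠] t, t ∈ closedBall ((t + τ) / 2) (1 * (|τ - t| / 2)) := by
    filter_upwards with τ
    simp only [mem_closedBall, one_mul, Real.dist_eq]
    rw [show t - (t + τ) / 2 = (t - τ) / 2 by ring, abs_sub_comm τ t, abs_div, abs_two]
  have key := ht (fun τ => (t + τ) / 2) (fun τ => |τ - t| / 2) hδ hmem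
  rw [← tendsto_sub_nhds_zero_iff]
  apply squeeze_zero_norm' _ key
  filter_upwards [self_mem_nhdsWithin] with τ (hτ : τ ≠ t)
  have hτt : τ - t ≠ 0 := sub_ne_zero.2 hτ
  have hii : ∀ a b : ℝ, IntervalIntegrable H volume a b := fun a b => hH.intervalIntegrable
  have h1 : slope (fun τ => ∫ s in (0:ℝ)..τ, H s) t τ - H t
      = (τ - t)⁻¹ • (∫ s in t..τ, (H s - H t)) := by
    have hadd : (∫ s in (0:ℝ)..τ, H s) = (∫ s in (0:ℝ)..t, H s) + ∫ s in t..τ, H s :=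
      (intervalIntegral.integral_add_adjacent_intervals (hii 0 t) (hii t τ)).symm
    rw [slope_def_module, hadd,
      intervalIntegral.integral_sub (hii t τ) intervalIntegrable_const,
      intervalIntegral.integral_const, smul_sub, smul_sub, smul_smul,
      inv_mul_cancel₀ hτt, one_smul, smul_add]
    abel
  rw [h1]
  have hsub : Ι t τ ⊆ closedBall ((t + τ) / 2) (|τ - t| / 2) := by
    intro y hy
    rw [uIoc_eq_union] at hy
    simp only [mem_closedBall, Real.dist_eq]
    rcases abs_cases (τ - t) with ⟨h1, h2⟩ | ⟨h1, h2⟩ <;>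
      rcases abs_cases (y - (t + τ) / 2) with ⟨h3, h4⟩ | ⟨h3, h4⟩ <;>
      rcases hy with hy | hy <;> rw [mem_Ioc] at hy <;>
      obtain ⟨h5, h6⟩ := hy <;> rw [h1, h3] <;> linarith
  have hInt : IntegrableOn (fun y => ‖H y - H t‖) (closedBall ((t + τ) / 2) (|τ - t| / 2)) := by
    exact (hH.integrableOn.sub (integrableOn_const measure_closedBall_lt_top.ne)).norm
  calc ‖(τ - t)⁻¹ • (∫ s in t..τ, (H s - H t))‖
      = |τ - t|⁻¹ * ‖∫ s in t..τ, (H s - H t)‖ := by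
        rw [norm_smul, norm_inv, Real.norm_eq_abs]
    _ ≤ |τ - t|⁻¹ * ∫ s in Ι t τ, ‖H s - H t‖ := by
        gcongr
        exact intervalIntegral.norm_integral_le_integral_norm_uIoc
    _ ≤ |τ - t|⁻¹ * ∫ s in closedBall ((t + τ) / 2) (|τ - t| / 2), ‖H s - H t‖ := by
        refine mul_le_mul_of_nonneg_left ?_ (by positivity)
        exact setIntegral_mono_set hInt (Eventually.of_forall fun y => norm_nonneg _)
          (HasSubset.Subset.eventuallyLE hsub)
    _ = ⨍ y in closedBall ((t + τ) / 2) (|τ - t| / 2), ‖H y - H t‖ := by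
        rw [setAverage_eq, Real.volume_real_closedBall (by positivity), smul_eq_mul]
        congr 1
        rw [show 2 * (|τ - t| / 2) = |τ - t| by ring]


theorem aux_ftc (H : ℝ → ℂ) (hH : Integrable H) (T : ℝ) :
    ∫ t in (0:ℝ)..T, Complex.exp (-(∫ s in (0:ℝ)..t, H s)) * H t
      = 1 - Complex.exp (-(∫ s in (0:ℝ)..T, H s)) := by
  set F : ℝ → ℂ := fun t => ∫ s in (0:ℝ)..t, H s with hF
  set N : ℝ := ∫ s, ‖H s‖ with hN
  have hN0 : 0 ≤ N := integral_nonneg fun s => norm_nonneg _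
  set M : ℝ := Real.exp (N + 1) with hM
  have hM0 : 0 < M := Real.exp_pos _
  set X : ℂ := (∫ t in (0:ℝ)..T, Complex.exp (-F t) * H t) - (1 - Complex.exp (-F T)) with hX
  have hFb : ∀ t, ‖F t‖ ≤ N := by
    intro t
    calc ‖F t‖ ≤ ∫ s in Ι 0 t, ‖H s‖ := intervalIntegral.norm_integral_le_integral_norm_uIoc
      _ ≤ N := setIntegral_le_integral hH.norm (Eventually.of_forall fun s => norm_nonneg _)
  have hFcont : Continuous F :=
    intervalIntegral.continuous_primitive (fun a b => hH.intervalIntegrable) 0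
  have hexpFb : ∀ t, ‖Complex.exp (-F t)‖ ≤ M := by
    intro t
    rw [Complex.norm_exp]
    apply Real.exp_le_exp.2
    calc (-F t).re ≤ ‖-F t‖ := Complex.re_le_norm _
      _ = ‖F t‖ := by rw [norm_neg]
      _ ≤ N + 1 := le_trans (hFb t) (by linarith)
  have hu : Integrable (fun t => Complex.exp (-F t) * H t) := by
    apply hH.bdd_mul (hFcont.neg.cexp.aestronglyMeasurable)
    exact Eventually.of_forall hexpFb
  have main : ∀ ε : ℝ, 0 < ε → ε ≤ 1 → ‖X‖ ≤ M * (2 * N + 5) * ε := by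
    intro ε hε hε1
    obtain ⟨H', -, hH'ε, hH'c, hH'i⟩ := hH.exists_hasCompactSupport_integral_sub_le hε
    set F' : ℝ → ℂ := fun t => ∫ s in (0:ℝ)..t, H' s with hF'
    have hd : Integrable (fun s => H s - H' s) := hH.sub hH'i
    have hFF' : ∀ t, ‖F t - F' t‖ ≤ ε := by
      intro t
      have heq : F t - F' t = ∫ s in (0:ℝ)..t, (H s - H' s) := by
        rw [intervalIntegral.integral_sub hH.intervalIntegrable hH'i.intervalIntegrable]
      rw [heq]
      calc ‖∫ s in (0:ℝ)..t, (H s - H' s)‖ ≤ ∫ s in Ι 0 t, ‖H s - H' s‖ :=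
            intervalIntegral.norm_integral_le_integral_norm_uIoc
        _ ≤ ∫ s, ‖H s - H' s‖ :=
            setIntegral_le_integral hd.norm (Eventually.of_forall fun s => norm_nonneg _)
        _ ≤ ε := hH'ε
    have hF'cont : Continuous F' :=
      intervalIntegral.continuous_primitive (fun a b => hH'i.intervalIntegrable) 0
    have hexpF'b : ∀ t, ‖Complex.exp (-F' t)‖ ≤ M := by
      intro t
      rw [Complex.norm_exp]
      apply Real.exp_le_exp.2
      calc (-F' t).re ≤ ‖-F' t‖ := Complex.re_le_norm _
        _ = ‖F' t‖ := by rw [norm_neg]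
        _ = ‖F t - (F t - F' t)‖ := by congr 1; ring
        _ ≤ ‖F t‖ + ‖F t - F' t‖ := norm_sub_le _ _
        _ ≤ N + 1 := add_le_add (hFb t) (le_trans (hFF' t) hε1)
    have hdiff : ∀ t, ‖Complex.exp (-F t) - Complex.exp (-F' t)‖ ≤ M * (2 * ε) := by
      intro t
      have hid : Complex.exp (-F t) - Complex.exp (-F' t)
          = Complex.exp (-F' t) * (Complex.exp (F' t - F t) - 1) := by
        rw [mul_sub, mul_one, ← Complex.exp_add]
        ring_nf
      rw [hid, norm_mul]
      have h1 : ‖Complex.exp (F' t - F t) - 1‖ ≤ 2 * ε := by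
        have h2 : ‖F' t - F t‖ ≤ ε := by rw [norm_sub_rev]; exact hFF' t
        have := Complex.norm_exp_sub_one_le (x := F' t - F t) (le_trans h2 hε1)
        calc ‖Complex.exp (F' t - F t) - 1‖ ≤ 2 * ‖F' t - F t‖ := this
          _ ≤ 2 * ε := by linarith
      exact mul_le_mul (hexpF'b t) h1 (norm_nonneg _) (le_of_lt hM0)
    have hu' : Integrable (fun t => Complex.exp (-F' t) * H' t) := by
      apply hH'i.bdd_mul (hF'cont.neg.cexp.aestronglyMeasurable)
      exact Eventually.of_forall hexpF'b
    have hFTC : ∫ t in (0:ℝ)..T, Complex.exp (-F' t) * H' t = 1 - Complex.exp (-F' T) := by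
      have hderiv : ∀ t ∈ Set.uIcc (0:ℝ) T,
          HasDerivAt (fun u => -Complex.exp (-F' u)) (Complex.exp (-F' t) * H' t) t := by
        intro t _
        have h1 : HasDerivAt F' (H' t) t :=
          intervalIntegral.integral_hasDerivAt_right hH'i.intervalIntegrable
            (hH'c.stronglyMeasurableAtFilter _ _) hH'c.continuousAt
        have h2 : HasDerivAt (fun u => -Complex.exp (-F' u))
            (-(Complex.exp (-F' t) * -H' t)) t := (h1.neg.cexp).neg
        convert h2 using 1
        ring
      have h3 := intervalIntegral.integral_eq_sub_of_hasDerivAt hderiv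
        ((hF'cont.neg.cexp.mul hH'c).intervalIntegrable 0 T)
      rw [h3]
      have hF'0 : F' 0 = 0 := intervalIntegral.integral_same
      rw [hF'0]
      simp only [neg_zero, Complex.exp_zero]
      ring
    have hN' : ∫ s, ‖H' s‖ ≤ N + 1 := by
      have h1 : ∀ s, ‖H' s‖ ≤ ‖H s‖ + ‖H s - H' s‖ := by
        intro s
        calc ‖H' s‖ = ‖H s - (H s - H' s)‖ := by congr 1; ring
          _ ≤ ‖H s‖ + ‖H s - H' s‖ := norm_sub_le _ _
      calc ∫ s, ‖H' s‖ ≤ ∫ s, (‖H s‖ + ‖H s - H' s‖) :=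
            integral_mono hH'i.norm (hH.norm.add hd.norm) h1
        _ = N + ∫ s, ‖H s - H' s‖ := by rw [integral_add hH.norm hd.norm]
        _ ≤ N + 1 := by linarith [le_trans hH'ε hε1]
    have ha : Integrable (fun t => M * ‖H t - H' t‖) := hd.norm.const_mul M
    have hb : Integrable (fun t => M * (2 * ε) * ‖H' t‖) := hH'i.norm.const_mul (M * (2 * ε))
    have hest1 : ‖(∫ t in (0:ℝ)..T, Complex.exp (-F t) * H t)
        - ∫ t in (0:ℝ)..T, Complex.exp (-F' t) * H' t‖ ≤ M * ε + M * (2 * ε) * (N + 1) := by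
      rw [← intervalIntegral.integral_sub hu.intervalIntegrable hu'.intervalIntegrable]
      have hbd : ∀ t, ‖Complex.exp (-F t) * H t - Complex.exp (-F' t) * H' t‖
          ≤ M * ‖H t - H' t‖ + M * (2 * ε) * ‖H' t‖ := by
        intro t
        have hid : Complex.exp (-F t) * H t - Complex.exp (-F' t) * H' t
            = Complex.exp (-F t) * (H t - H' t)
              + (Complex.exp (-F t) - Complex.exp (-F' t)) * H' t := by ring
        rw [hid]
        calc ‖Complex.exp (-F t) * (H t - H' t)
              + (Complex.exp (-F t) - Complex.exp (-F' t)) * H' t‖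
            ≤ ‖Complex.exp (-F t) * (H t - H' t)‖
              + ‖(Complex.exp (-F t) - Complex.exp (-F' t)) * H' t‖ := norm_add_le _ _
          _ ≤ M * ‖H t - H' t‖ + M * (2 * ε) * ‖H' t‖ := by
              rw [norm_mul, norm_mul]
              gcongr
              · exact hexpFb t
              · exact hdiff t
      calc ‖∫ t in (0:ℝ)..T, (Complex.exp (-F t) * H t - Complex.exp (-F' t) * H' t)‖
          ≤ ∫ t in Ι 0 T, ‖Complex.exp (-F t) * H t - Complex.exp (-F' t) * H' t‖ :=
            intervalIntegral.norm_integral_le_integral_norm_uIoc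
        _ ≤ ∫ t in Ι 0 T, (M * ‖H t - H' t‖ + M * (2 * ε) * ‖H' t‖) := by
            exact setIntegral_mono ((hu.sub hu').norm.integrableOn)
              ((ha.add hb).integrableOn) hbd
        _ ≤ ∫ t, (M * ‖H t - H' t‖ + M * (2 * ε) * ‖H' t‖) := by
            apply setIntegral_le_integral (ha.add hb)
            filter_upwards with t
            have h2ε : (0:ℝ) ≤ 2 * ε := by linarith
            exact add_nonneg (mul_nonneg hM0.le (norm_nonneg _))
              (mul_nonneg (mul_nonneg hM0.le h2ε) (norm_nonneg _))
        _ = M * (∫ t, ‖H t - H' t‖) + M * (2 * ε) * ∫ t, ‖H' t‖ := by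
            rw [integral_add ha hb, integral_const_mul, integral_const_mul]
        _ ≤ M * ε + M * (2 * ε) * (N + 1) := by
            have h2' : (0:ℝ) ≤ 2 * ε := by linarith
            exact add_le_add (mul_le_mul_of_nonneg_left hH'ε hM0.le)
              (mul_le_mul_of_nonneg_left hN' (mul_nonneg hM0.le h2'))
    have hXid : X = ((∫ t in (0:ℝ)..T, Complex.exp (-F t) * H t)
          - ∫ t in (0:ℝ)..T, Complex.exp (-F' t) * H' t)
        + (Complex.exp (-F T) - Complex.exp (-F' T)) := by
      rw [hX, hFTC]; ring
    calc ‖X‖ ≤ ‖(∫ t in (0:ℝ)..T, Complex.exp (-F t) * H t)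
          - ∫ t in (0:ℝ)..T, Complex.exp (-F' t) * H' t‖
        + ‖Complex.exp (-F T) - Complex.exp (-F' T)‖ := by
          rw [hXid]; exact norm_add_le _ _
      _ ≤ (M * ε + M * (2 * ε) * (N + 1)) + M * (2 * ε) := add_le_add hest1 (hdiff T)
      _ ≤ M * (2 * N + 5) * ε := by nlinarith
  have hX0 : X = 0 := by
    by_contra hne
    have hpos : 0 < ‖X‖ := norm_pos_iff.2 hne
    set K : ℝ := M * (2 * N + 5) with hK
    have hK0 : 0 < K := by
      rw [hK]
      have : (0:ℝ) < 2 * N + 5 := by linarith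
      exact mul_pos hM0 this
    have hεp : (0:ℝ) < min 1 (‖X‖ / (2 * K)) := lt_min one_pos (div_pos hpos (by linarith))
    have hmain := main _ hεp (min_le_left _ _)
    have h2 : K * min 1 (‖X‖ / (2 * K)) ≤ K * (‖X‖ / (2 * K)) :=
      mul_le_mul_of_nonneg_left (min_le_right _ _) (le_of_lt hK0)
    have h3 : K * (‖X‖ / (2 * K)) = ‖X‖ / 2 := by field_simp
    rw [h3] at h2
    linarith
  rw [← sub_eq_zero]
  exact hX0


/-- For `f, g ∈ L²(ℝ₊)`, the function `φ(t) = ⟨L_t f, L_t g⟩` has a.e. derivative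
`φ'(t) = −conj(f(t)) g(t)`, and `∫_0^∞ e^{φ(t)} conj(f(t)) g(t) dt = e^{⟨f,g⟩} − 1`. -/
theorem stmt9 (f g : ℝ → ℂ)
    (hf : MemLp f 2 (volume.restrict (Set.Ici 0)))
    (hg : MemLp g 2 (volume.restrict (Set.Ici 0))) :
    (∀ᵐ t ∂(volume.restrict (Set.Ioi (0:ℝ))),
        HasDerivAt
          (fun τ => ∫ x in Set.Ici (0:ℝ), starRingEnd ℂ (f (x + τ)) * g (x + τ))
          (-(starRingEnd ℂ (f t) * g t)) t) ∧
    (∫ t in Set.Ici (0:ℝ),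
        Complex.exp (∫ x in Set.Ici (0:ℝ), starRingEnd ℂ (f (x + t)) * g (x + t)) *
          (starRingEnd ℂ (f t) * g t))
      = Complex.exp (∫ x in Set.Ici (0:ℝ), starRingEnd ℂ (f x) * g x) - 1 := by
  -- integrability of the product
  have hfc : MemLp (fun y => starRingEnd ℂ (f y)) 2 (volume.restrict (Set.Ici 0)) := by
    refine ⟨?_, ?_⟩
    · exact continuous_star.comp_aestronglyMeasurable hf.1
    · rw [show eLpNorm (fun y => starRingEnd ℂ (f y)) 2 (volume.restrict (Set.Ici 0))
          = eLpNorm f 2 (volume.restrict (Set.Ici 0)) from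
        eLpNorm_congr_norm_ae (Eventually.of_forall fun y => by simp)]
      exact hf.2
  have hint : Integrable (fun y => starRingEnd ℂ (f y) * g y)
      (volume.restrict (Set.Ici 0)) := by
    rw [← memLp_one_iff_integrable]
    have h1 : MemLp ((fun y => starRingEnd ℂ (f y)) • g) 1 (volume.restrict (Set.Ici 0)) :=
      hg.smul hfc (hpqr := ⟨by rw [inv_one]; exact ENNReal.inv_two_add_inv_two⟩)
    exact h1
  have hOn : IntegrableOn (fun y => starRingEnd ℂ (f y) * g y) (Set.Ici 0) volume := hint
  set H : ℝ → ℂ := (Set.Ici (0:ℝ)).indicator (fun y => starRingEnd ℂ (f y) * g y) with hHdef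
  have hHint : Integrable H volume := by
    rw [hHdef, integrable_indicator_iff measurableSet_Ici]
    exact hOn
  set C : ℂ := ∫ x in Set.Ici (0:ℝ), starRingEnd ℂ (f x) * g x with hCdef
  -- translation identity
  have key : ∀ τ : ℝ, (∫ x in Set.Ici (0:ℝ), starRingEnd ℂ (f (x + τ)) * g (x + τ))
      = ∫ y in Set.Ici τ, starRingEnd ℂ (f y) * g y := by
    intro τ
    have e1 : ∀ x : ℝ, (Set.Ici (0:ℝ)).indicator
        (fun x => starRingEnd ℂ (f (x + τ)) * g (x + τ)) x
        = (Set.Ici τ).indicator (fun y => starRingEnd ℂ (f y) * g y) (x + τ) := by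
      intro x
      by_cases hx : x ∈ Set.Ici (0:ℝ)
      · rw [Set.indicator_of_mem hx, Set.indicator_of_mem
          (by simp only [Set.mem_Ici] at hx ⊢; linarith)]
      · rw [Set.indicator_of_notMem hx, Set.indicator_of_notMem (by
          simp only [Set.mem_Ici] at hx ⊢
          intro hc
          exact hx (by linarith))]
    calc (∫ x in Set.Ici (0:ℝ), starRingEnd ℂ (f (x + τ)) * g (x + τ))
        = ∫ x, (Set.Ici (0:ℝ)).indicator
            (fun x => starRingEnd ℂ (f (x + τ)) * g (x + τ)) x :=
          (integral_indicator measurableSet_Ici).symm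
      _ = ∫ x, (Set.Ici τ).indicator (fun y => starRingEnd ℂ (f y) * g y) (x + τ) := by
          simp_rw [e1]
      _ = ∫ y, (Set.Ici τ).indicator (fun y => starRingEnd ℂ (f y) * g y) y :=
          integral_add_right_eq_self _ τ
      _ = ∫ y in Set.Ici τ, starRingEnd ℂ (f y) * g y := integral_indicator measurableSet_Ici
  -- decomposition of φ for τ ≥ 0
  have hφ : ∀ τ : ℝ, 0 ≤ τ →
      (∫ x in Set.Ici (0:ℝ), starRingEnd ℂ (f (x + τ)) * g (x + τ))
        = C - ∫ s in (0:ℝ)..τ, H s := by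
    intro τ hτ
    rw [key τ]
    have h1 : ∫ s in (0:ℝ)..τ, H s = ∫ s in Set.Ioc (0:ℝ) τ, starRingEnd ℂ (f s) * g s := by
      rw [intervalIntegral.integral_of_le hτ]
      refine setIntegral_congr_fun measurableSet_Ioc fun x hx => ?_
      rw [hHdef]
      exact Set.indicator_of_mem (Set.mem_Ici.2 hx.1.le) _
    have h2 : IntegrableOn (fun y => starRingEnd ℂ (f y) * g y) (Set.Ioc 0 τ) volume :=
      hOn.mono_set (fun x hx => Set.mem_Ici.2 hx.1.le)
    have h3 : IntegrableOn (fun y => starRingEnd ℂ (f y) * g y) (Set.Ioi τ) volume :=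
      hOn.mono_set fun x hx => Set.mem_Ici.2 (le_trans hτ (le_of_lt hx))
    have hsplit : C = (∫ s in Set.Ioc (0:ℝ) τ, starRingEnd ℂ (f s) * g s)
        + ∫ s in Set.Ioi τ, starRingEnd ℂ (f s) * g s := by
      rw [hCdef, integral_Ici_eq_integral_Ioi, ← Set.Ioc_union_Ioi_eq_Ioi hτ,
        setIntegral_union (Set.Ioc_disjoint_Ioi le_rfl) measurableSet_Ioi h2 h3]
    rw [h1, hsplit, integral_Ici_eq_integral_Ioi]
    ring
  constructor
  · -- a.e. derivative
    rw [ae_restrict_iff' measurableSet_Ioi]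
    filter_upwards [aux_ae_hasDerivAt H hHint] with t hder ht
    have hHt : H t = starRingEnd ℂ (f t) * g t := by
      rw [hHdef]
      exact Set.indicator_of_mem (Set.mem_Ici.2 (le_of_lt ht)) _
    have hd2 : HasDerivAt (fun τ => C - ∫ s in (0:ℝ)..τ, H s) (-(H t)) t := hder.const_sub C
    have heq : (fun τ => ∫ x in Set.Ici (0:ℝ), starRingEnd ℂ (f (x + τ)) * g (x + τ))
        =ᶠ[nhds t] fun τ => C - ∫ s in (0:ℝ)..τ, H s := by
      filter_upwards [isOpen_Ioi.mem_nhds ht] with τ hτ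
      exact hφ τ (le_of_lt hτ)
    have hfin := hd2.congr_of_eventuallyEq heq
    rwa [hHt] at hfin
  · -- the integral identity
    have hFcont : Continuous (fun t => ∫ s in (0:ℝ)..t, H s) :=
      intervalIntegral.continuous_primitive (fun a b => hHint.intervalIntegrable) 0
    set N : ℝ := ∫ s, ‖H s‖ with hN
    have hFb : ∀ t : ℝ, ‖∫ s in (0:ℝ)..t, H s‖ ≤ N := by
      intro t
      calc ‖∫ s in (0:ℝ)..t, H s‖ ≤ ∫ s in Ι 0 t, ‖H s‖ :=
            intervalIntegral.norm_integral_le_integral_norm_uIoc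
        _ ≤ N := setIntegral_le_integral hHint.norm (Eventually.of_forall fun s => norm_nonneg _)
    have hexpb : ∀ t : ℝ, ‖Complex.exp (-(∫ s in (0:ℝ)..t, H s))‖ ≤ Real.exp N := by
      intro t
      rw [Complex.norm_exp]
      apply Real.exp_le_exp.2
      calc (-(∫ s in (0:ℝ)..t, H s)).re ≤ ‖-(∫ s in (0:ℝ)..t, H s)‖ :=
            Complex.re_le_norm _
        _ = ‖∫ s in (0:ℝ)..t, H s‖ := by rw [norm_neg]
        _ ≤ N := hFb t
    have hG : Integrable (fun t => Complex.exp (-(∫ s in (0:ℝ)..t, H s)) * H t) volume :=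
      hHint.bdd_mul (hFcont.neg.cexp.aestronglyMeasurable) (Eventually.of_forall hexpb)
    rw [integral_Ici_eq_integral_Ioi]
    have hcong : (∫ t in Set.Ioi (0:ℝ),
          Complex.exp (∫ x in Set.Ici (0:ℝ), starRingEnd ℂ (f (x + t)) * g (x + t)) *
            (starRingEnd ℂ (f t) * g t))
        = ∫ t in Set.Ioi (0:ℝ),
            Complex.exp C * (Complex.exp (-(∫ s in (0:ℝ)..t, H s)) * H t) := by
      refine setIntegral_congr_fun measurableSet_Ioi fun t ht => ?_
      have hHt : H t = starRingEnd ℂ (f t) * g t := by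
        rw [hHdef]
        exact Set.indicator_of_mem (Set.mem_Ici.2 (le_of_lt ht)) _
      rw [hφ t (le_of_lt ht), hHt, sub_eq_add_neg, Complex.exp_add, mul_assoc]
    rw [hcong, integral_const_mul]
    have hlim1 : Tendsto (fun T => ∫ t in (0:ℝ)..T,
          Complex.exp (-(∫ s in (0:ℝ)..t, H s)) * H t) atTop
        (nhds (∫ t in Set.Ioi (0:ℝ), Complex.exp (-(∫ s in (0:ℝ)..t, H s)) * H t)) :=
      intervalIntegral_tendsto_integral_Ioi 0 hG.integrableOn tendsto_id
    have hCC : (∫ t in Set.Ioi (0:ℝ), H t) = C := by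
      rw [hCdef, integral_Ici_eq_integral_Ioi]
      refine setIntegral_congr_fun measurableSet_Ioi fun t ht => ?_
      rw [hHdef]
      exact Set.indicator_of_mem (Set.mem_Ici.2 (le_of_lt ht)) _
    have hlim2 : Tendsto (fun T => ∫ s in (0:ℝ)..T, H s) atTop (nhds C) := by
      have h4 := intervalIntegral_tendsto_integral_Ioi 0 hHint.integrableOn tendsto_id
      rwa [hCC] at h4
    have hlim3 : Tendsto (fun T => 1 - Complex.exp (-(∫ s in (0:ℝ)..T, H s))) atTop
        (nhds (1 - Complex.exp (-C))) :=
      Tendsto.const_sub _ ((Complex.continuous_exp.tendsto _).comp hlim2.neg)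
    have heqfun : (fun T => ∫ t in (0:ℝ)..T, Complex.exp (-(∫ s in (0:ℝ)..t, H s)) * H t)
        = fun T => 1 - Complex.exp (-(∫ s in (0:ℝ)..T, H s)) :=
      funext fun T => aux_ftc H hHint T
    rw [heqfun] at hlim1
    have hJ : (∫ t in Set.Ioi (0:ℝ), Complex.exp (-(∫ s in (0:ℝ)..t, H s)) * H t)
        = 1 - Complex.exp (-C) := tendsto_nhds_unique hlim1 hlim3
    rw [hJ, mul_sub, mul_one, ← Complex.exp_add, add_neg_cancel, Complex.exp_zero]
end

section
/- Define on exponential vectors of the symmetric Fock space the kernel K(f,g) = exp(⟨f,g⟩) for f, g ∈ L²(ℝ₊, ℂ). Then the map W defined by the property ⟨W e(f), W e(g)⟩ = 1 + ∫_0^∞ exp(⟨L_t f, L_t g⟩) conj(f(t)) g(t) dt preserves the exponential-vector kernel: 1 + ∫_0^∞ exp(⟨L_t f, L_t g⟩) conj(f(t)) g(t) dt = exp(⟨f,g⟩) for all f, g ∈ L²(ℝ₊, ℂ). -/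
open MeasureTheory Set
open scoped Nat ENNReal

/-- The tail integral `G(t) = ∫_t^∞ h`. -/
noncomputable def fockAuxG (h : ℝ → ℂ) (t : ℝ) : ℂ := ∫ s in Set.Ici t, h s

lemma fockAuxG_bdd (h : ℝ → ℂ) (hh : Integrable h (volume : Measure ℝ)) (t : ℝ) :
    ‖fockAuxG h t‖ ≤ ∫ s, ‖h s‖ := by
  calc ‖fockAuxG h t‖ ≤ ∫ s in Ici t, ‖h s‖ := norm_integral_le_integral_norm _
  _ ≤ ∫ s, ‖h s‖ :=
    setIntegral_le_integral hh.norm (Filter.Eventually.of_forall fun s => norm_nonneg _)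

lemma fockAuxG_diff (h : ℝ → ℂ) (hh : Integrable h (volume : Measure ℝ)) {a b : ℝ}
    (hab : a ≤ b) : fockAuxG h a = (∫ s in Ioc a b, h s) + fockAuxG h b := by
  unfold fockAuxG
  rw [integral_Ici_eq_integral_Ioi, integral_Ici_eq_integral_Ioi, ← Ioc_union_Ioi_eq_Ioi hab,
    setIntegral_union (Ioc_disjoint_Ioi le_rfl) measurableSet_Ioi hh.integrableOn hh.integrableOn]

lemma fockAuxG_prim (h : ℝ → ℂ) (hh : Integrable h (volume : Measure ℝ)) (t : ℝ) :
    fockAuxG h t = fockAuxG h 0 - ∫ s in (0:ℝ)..t, h s := by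
  rcases le_total (0:ℝ) t with h0 | h0
  · rw [intervalIntegral.integral_of_le h0]
    have := fockAuxG_diff h hh h0
    rw [this]; ring
  · rw [intervalIntegral.integral_of_ge h0]
    have := fockAuxG_diff h hh h0
    rw [this]; ring

lemma fockAuxG_cont (h : ℝ → ℂ) (hh : Integrable h (volume : Measure ℝ)) :
    Continuous (fockAuxG h) := by
  have : fockAuxG h = fun t => fockAuxG h 0 - ∫ s in (0:ℝ)..t, h s :=
    funext (fockAuxG_prim h hh)
  rw [this]
  exact continuous_const.sub (hh.continuous_primitive 0)

lemma fockAuxG_int (h : ℝ → ℂ) (hh : Integrable h (volume : Measure ℝ)) (n : ℕ) (t : ℝ) :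
    IntegrableOn (fun s => fockAuxG h s ^ n * h s) (Ici t) := by
  refine hh.integrableOn.bdd_mul (c := (∫ s, ‖h s‖) ^ n) (((fockAuxG_cont h hh).pow n).aestronglyMeasurable.restrict)
    (Filter.Eventually.of_forall fun s => ?_)
  rw [norm_pow]
  exact pow_le_pow_left₀ (norm_nonneg _) (fockAuxG_bdd h hh s) n

/-- The key recursion: `∫_t^∞ G(s)^n h(s) ds = G(t)^(n+1)/(n+1)`. -/
lemma fockAuxG_rec (h : ℝ → ℂ) (hh : Integrable h (volume : Measure ℝ)) (n : ℕ) (t : ℝ) :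
    ∫ s in Ici t, fockAuxG h s ^ n * h s = fockAuxG h t ^ (n + 1) / ((n : ℂ) + 1) := by
  induction n generalizing t with
  | zero => simp [fockAuxG]
  | succ n IH =>
    set μ := volume.restrict (Ici t) with hμdef
    set F : ℝ × ℝ → ℂ := fun z => h z.1 * (fockAuxG h z.2 ^ n * h z.2) with hF
    have hFint : Integrable F (μ.prod μ) :=
      Integrable.mul_prod hh.integrableOn (fockAuxG_int h hh n t)
    set D : Set (ℝ × ℝ) := {z | z.1 < z.2} with hDdef
    have hDm : MeasurableSet D := measurableSet_lt measurable_fst measurable_snd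
    have hind : Integrable (D.indicator F) (μ.prod μ) := hFint.indicator hDm
    have way1 : ∫ z, D.indicator F z ∂(μ.prod μ)
        = ((n : ℂ) + 1)⁻¹ * ∫ s in Ici t, fockAuxG h s ^ (n + 1) * h s := by
      rw [MeasureTheory.integral_prod _ hind]
      have step : ∀ s ∈ Ici t, (∫ u, D.indicator F (s, u) ∂μ)
          = ((n : ℂ) + 1)⁻¹ * (fockAuxG h s ^ (n + 1) * h s) := by
        intro s hs
        have e1 : ∀ u, D.indicator F (s, u)
            = (Ioi s).indicator (fun u => h s * (fockAuxG h u ^ n * h u)) u := by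
          intro u
          by_cases hu : s < u
          · rw [indicator_of_mem (show (s,u) ∈ D from hu),
              indicator_of_mem (show u ∈ Ioi s from hu)]
          · rw [indicator_of_notMem (show (s,u) ∉ D from hu),
              indicator_of_notMem (show u ∉ Ioi s from hu)]
        simp_rw [e1]
        rw [integral_indicator measurableSet_Ioi, hμdef,
          Measure.restrict_restrict measurableSet_Ioi,
          inter_eq_left.mpr (Ioi_subset_Ici (le_trans hs (le_refl s)) : Ioi s ⊆ Ici t),
          integral_const_mul, ← integral_Ici_eq_integral_Ioi, IH s]
        rw [div_eq_mul_inv]; ring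
      rw [setIntegral_congr_fun measurableSet_Ici step, integral_const_mul]
    have way2 : ∫ z, D.indicator F z ∂(μ.prod μ)
        = fockAuxG h t * (fockAuxG h t ^ (n + 1) / ((n : ℂ) + 1))
          - ∫ s in Ici t, fockAuxG h s ^ (n + 1) * h s := by
      rw [MeasureTheory.integral_prod_symm _ hind]
      have step : ∀ u ∈ Ici t, (∫ s, D.indicator F (s, u) ∂μ)
          = fockAuxG h t * (fockAuxG h u ^ n * h u) - fockAuxG h u ^ (n + 1) * h u := by
        intro u hu
        have e1 : ∀ s, D.indicator F (s, u) = (Iio u).indicator h s * (fockAuxG h u ^ n * h u) := by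
          intro s
          by_cases hs : s < u
          · rw [indicator_of_mem (show (s,u) ∈ D from hs),
              indicator_of_mem (show s ∈ Iio u from hs)]
          · rw [indicator_of_notMem (show (s,u) ∉ D from hs),
              indicator_of_notMem (show s ∉ Iio u from hs), zero_mul]
        simp_rw [e1]
        rw [integral_mul_const, integral_indicator measurableSet_Iio, hμdef,
          Measure.restrict_restrict measurableSet_Iio]
        have e2 : Iio u ∩ Ici t = Ico t u := by ext x; simp [mem_Ico, and_comm]
        rw [e2]
        have e3 : ∫ s in Ico t u, h s = fockAuxG h t - fockAuxG h u := by
          have := fockAuxG_diff h hh hu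
          rw [integral_Ico_eq_integral_Ioo, ← integral_Ioc_eq_integral_Ioo, this]
          ring
        rw [e3]; ring
      rw [setIntegral_congr_fun measurableSet_Ici step,
        integral_sub ((fockAuxG_int h hh n t).const_mul _) (fockAuxG_int h hh (n+1) t),
        integral_const_mul, IH t]
    have hn1 : ((n : ℂ) + 1) ≠ 0 := Nat.cast_add_one_ne_zero n
    have hn2 : ((n : ℂ) + 1 + 1) ≠ 0 := by
      have := Nat.cast_add_one_ne_zero (n + 1) (R := ℂ); push_cast at this ⊢; exact this
    have key := way1.symm.trans way2
    push_cast
    set S := ∫ s in Ici t, fockAuxG h s ^ (n + 1) * h s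
    field_simp at key ⊢
    ring_nf at key ⊢
    linear_combination key

lemma fockAux_exp_hasSum (z : ℂ) : HasSum (fun n : ℕ => z ^ n / n !) (Complex.exp z) := by
  rw [Complex.exp_eq_exp_ℂ, NormedSpace.exp_eq_tsum_div]
  exact (NormedSpace.expSeries_div_summable z).hasSum

/-- The key analytic identity for an integrable function on the line. -/
lemma fockAux_key (h : ℝ → ℂ) (hh : Integrable h (volume : Measure ℝ)) :
    1 + ∫ t in Ici (0:ℝ), Complex.exp (∫ s in Ici t, h s) * h t
      = Complex.exp (∫ s in Ici (0:ℝ), h s) := by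
  set M : ℝ := ∫ s, ‖h s‖ with hM
  show 1 + ∫ t in Ici (0:ℝ), Complex.exp (fockAuxG h t) * h t = Complex.exp (fockAuxG h 0)
  have hFint : ∀ n : ℕ, Integrable (fun t => fockAuxG h t ^ n / (n ! : ℂ) * h t)
      (volume.restrict (Ici (0:ℝ))) := by
    intro n
    have := (fockAuxG_int h hh n 0).const_mul ((n ! : ℂ))⁻¹
    refine this.congr ?_
    refine Filter.Eventually.of_forall fun t => ?_
    simp only [div_eq_mul_inv]; ring
  have hnorm : ∀ n : ℕ, (∫ t in Ici (0:ℝ), ‖fockAuxG h t ^ n / (n ! : ℂ) * h t‖)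
      ≤ M ^ n / n ! * M := by
    intro n
    have hb : ∀ t, ‖fockAuxG h t ^ n / (n ! : ℂ) * h t‖ ≤ M ^ n / n ! * ‖h t‖ := by
      intro t
      rw [norm_mul, norm_div, norm_pow]
      have h1 : ‖fockAuxG h t‖ ^ n ≤ M ^ n :=
        pow_le_pow_left₀ (norm_nonneg _) (fockAuxG_bdd h hh t) n
      have h2 : ‖(n ! : ℂ)‖ = (n ! : ℝ) := by
        rw [Complex.norm_natCast]
      rw [h2]
      gcongr
    calc (∫ t in Ici (0:ℝ), ‖fockAuxG h t ^ n / (n ! : ℂ) * h t‖)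
        ≤ ∫ t in Ici (0:ℝ), M ^ n / n ! * ‖h t‖ :=
          integral_mono_of_nonneg (Filter.Eventually.of_forall fun t => norm_nonneg _)
            (hh.norm.integrableOn.const_mul _) (Filter.Eventually.of_forall hb)
      _ = M ^ n / n ! * ∫ t in Ici (0:ℝ), ‖h t‖ := integral_const_mul _ _
      _ ≤ M ^ n / n ! * M := by
          have hM0 : (0:ℝ) ≤ M := integral_nonneg fun s => norm_nonneg _
          refine mul_le_mul_of_nonneg_left ?_ (by positivity)
          exact setIntegral_le_integral hh.norm
            (Filter.Eventually.of_forall fun x => norm_nonneg _)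
  have hsummable : Summable fun n : ℕ => ∫ t in Ici (0:ℝ), ‖fockAuxG h t ^ n / (n ! : ℂ) * h t‖ := by
    refine Summable.of_nonneg_of_le (fun n => integral_nonneg fun t => norm_nonneg _)
      hnorm ?_
    exact (Real.summable_pow_div_factorial M).mul_right M
  have hswap := integral_tsum_of_summable_integral_norm hFint hsummable
  have hexp : ∀ t : ℝ, Complex.exp (fockAuxG h t) * h t
      = ∑' n : ℕ, fockAuxG h t ^ n / (n ! : ℂ) * h t := by
    intro t
    rw [← (fockAux_exp_hasSum (fockAuxG h t)).tsum_eq, ← tsum_mul_right]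
  calc 1 + ∫ t in Ici (0:ℝ), Complex.exp (fockAuxG h t) * h t
      = 1 + ∫ t in Ici (0:ℝ), ∑' n : ℕ, fockAuxG h t ^ n / (n ! : ℂ) * h t := by
        rw [integral_congr_ae (Filter.Eventually.of_forall fun t => hexp t)]
    _ = 1 + ∑' n : ℕ, ∫ t in Ici (0:ℝ), fockAuxG h t ^ n / (n ! : ℂ) * h t := by rw [← hswap]
    _ = 1 + ∑' n : ℕ, fockAuxG h 0 ^ (n + 1) / ((n + 1)! : ℂ) := by
        congr 1
        refine tsum_congr fun n => ?_
        have e1 : ∀ t : ℝ, fockAuxG h t ^ n / (n ! : ℂ) * h t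
            = ((n ! : ℂ))⁻¹ * (fockAuxG h t ^ n * h t) := by
          intro t; rw [div_eq_mul_inv]; ring
        simp_rw [e1]
        rw [integral_const_mul, fockAuxG_rec h hh n 0]
        rw [Nat.factorial_succ]
        push_cast
        have h1 : ((n:ℂ) + 1) ≠ 0 := Nat.cast_add_one_ne_zero n
        have h2 : ((n ! : ℕ) : ℂ) ≠ 0 := Nat.cast_ne_zero.mpr (Nat.factorial_ne_zero n)
        field_simp
    _ = Complex.exp (fockAuxG h 0) := by
        have hs := fockAux_exp_hasSum (fockAuxG h 0)
        have := hs.tsum_eq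
        rw [← this, Summable.tsum_eq_zero_add hs.summable]
        simp

lemma fockAux_shift_int (h : ℝ → ℂ) (t : ℝ) :
    ∫ x in Ici (0:ℝ), h (x + t) = ∫ x in Ici t, h x := by
  rw [← integral_indicator measurableSet_Ici, ← integral_indicator measurableSet_Ici,
    ← integral_add_right_eq_self (fun x => (Ici t).indicator h x) t]
  congr 1
  ext x
  simp only [indicator_apply, mem_Ici, le_add_iff_nonneg_left]

/-- The analytic identity underlying the isometry of `W` on exponential vectors:
`1 + ∫_0^∞ exp(⟨L_t f, L_t g⟩) conj(f(t)) g(t) dt = exp(⟨f,g⟩)` for `f, g ∈ L²(ℝ₊)`,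
where `(L_t f)(x) = f(x+t)`. -/
theorem stmt10 (f g : ℝ → ℂ)
    (hf : MemLp f 2 (volume.restrict (Set.Ici 0)))
    (hg : MemLp g 2 (volume.restrict (Set.Ici 0))) :
    1 + (∫ t in Set.Ici (0:ℝ),
        Complex.exp (∫ x in Set.Ici (0:ℝ), starRingEnd ℂ (f (x + t)) * g (x + t)) *
          (starRingEnd ℂ (f t) * g t))
      = Complex.exp (∫ x in Set.Ici (0:ℝ), starRingEnd ℂ (f x) * g x) := by
  set q : ℝ → ℂ := fun x => starRingEnd ℂ (f x) * g x with hq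
  have hconj : MemLp (fun x => starRingEnd ℂ (f x)) 2 (volume.restrict (Set.Ici 0)) := by
    refine ⟨RCLike.continuous_conj.comp_aestronglyMeasurable hf.1, ?_⟩
    have : eLpNorm (fun x => starRingEnd ℂ (f x)) 2 (volume.restrict (Set.Ici 0))
        = eLpNorm f 2 (volume.restrict (Set.Ici 0)) := by
      apply eLpNorm_congr_norm_ae
      exact Filter.Eventually.of_forall fun x => by simp
    rw [this]; exact hf.2
  have hqint : IntegrableOn q (Ici 0) volume := by
    have h12 : (1 : ℝ≥0∞) / 1 = 1 / 2 + 1 / 2 := by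
      rw [ENNReal.add_halves, one_div_one]
    have hsm : MemLp ((fun x => starRingEnd ℂ (f x)) • g) 1 (volume.restrict (Set.Ici 0)) :=
      hg.smul hconj
    rw [memLp_one_iff_integrable] at hsm
    exact hsm
  set h : ℝ → ℂ := (Ici (0:ℝ)).indicator q with hh
  have hhint : Integrable h (volume : Measure ℝ) := by
    rw [hh, integrable_indicator_iff measurableSet_Ici]; exact hqint
  have hinner : ∀ t : ℝ, 0 ≤ t → (∫ x in Ici (0:ℝ), q (x + t)) = ∫ s in Ici t, h s := by
    intro t ht
    rw [fockAux_shift_int q t, hh, setIntegral_indicator measurableSet_Ici,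
      inter_eq_left.mpr (Ici_subset_Ici.mpr ht)]
  have houter : (∫ t in Set.Ici (0:ℝ),
        Complex.exp (∫ x in Set.Ici (0:ℝ), q (x + t)) * q t)
      = ∫ t in Ici (0:ℝ), Complex.exp (∫ s in Ici t, h s) * h t := by
    refine setIntegral_congr_fun measurableSet_Ici fun t ht => ?_
    rw [hinner t ht, hh, indicator_of_mem ht]
  have hzero : (∫ x in Set.Ici (0:ℝ), q x) = ∫ s in Ici (0:ℝ), h s := by
    rw [hh, setIntegral_indicator measurableSet_Ici, inter_self]
  calc 1 + (∫ t in Set.Ici (0:ℝ), Complex.exp (∫ x in Set.Ici (0:ℝ), q (x + t)) * q t)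
      = 1 + ∫ t in Ici (0:ℝ), Complex.exp (∫ s in Ici t, h s) * h t := by rw [houter]
    _ = Complex.exp (∫ s in Ici (0:ℝ), h s) := fockAux_key h hhint
    _ = Complex.exp (∫ x in Set.Ici (0:ℝ), q x) := by rw [hzero]
end
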